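/- Let 𝒯 be a ℤ/m-graded triangulated category (1 ≤ m ≤ ∞) and let R be a commutative Noetherian ring acting centrally on 𝒯. Suppose G is a split-generator of 𝒯 such that Hom^•(G, G) is a Noetherian R-module. Then Hom^•(X, Y) is a Noetherian R-module for all objects X, Y of 𝒯. -/

import Mathlib

open CategoryTheory Category Limits Pretriangulated DirectSum

universe v u

namespace RouquierDim

variable {C : Type u} [Category.{v} C] [Preadditive C] [HasZeroObject C]
  [HasShift C ℤ] [∀ n : ℤ, (shiftFunctor C n).Additive] [Pretriangulated C]
  [HasBinaryBiproducts C]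

/-- `Z` is a summand of `K`: there are maps `r : Z ⟶ K`, `k : K ⟶ Z` with `r ≫ k = 𝟙 Z`. -/
def IsSummand (Z K : C) : Prop := ∃ (r : Z ⟶ K) (k : K ⟶ Z), r ≫ k = 𝟙 Z

/-- The subcategory `ℐ * 𝒥`: objects `K` admitting a distinguished triangle
`K₀ ⟶ K ⟶ K₁ ⟶ K₀⟦1⟧` with `K₀ ∈ ℐ` and `K₁ ∈ 𝒥`. -/
def star (I J : Set C) : Set C :=
  {K | ∃ (K₀ K₁ : C) (f : K₀ ⟶ K) (g : K ⟶ K₁) (h : K₁ ⟶ K₀⟦(1 : ℤ)⟧),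
    Triangle.mk f g h ∈ (distTriang C) ∧ K₀ ∈ I ∧ K₁ ∈ J}

/-- Membership in `⟨ℐ⟩`, the smallest strictly full subcategory containing `ℐ` and
closed under finite direct sums, shifts, and summands. -/
inductive angleMem (I : Set C) : C → Prop
  | of {X : C} (hX : X ∈ I) : angleMem I X
  | zero {X : C} (hX : IsZero X) : angleMem I X
  | shift {X : C} (n : ℤ) (hX : angleMem I X) : angleMem I (X⟦n⟧)
  | sum {X Y : C} (hX : angleMem I X) (hY : angleMem I Y) : angleMem I (X ⊞ Y)
  | smd {X Y : C} (h : IsSummand X Y) (hY : angleMem I Y) : angleMem I X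
  | iso {X Y : C} (e : X ≅ Y) (hX : angleMem I X) : angleMem I Y

/-- `⟨ℐ⟩` as a set of objects. -/
def angle (I : Set C) : Set C := {X | angleMem I X}

/-- `⟨ℐ⟩_n` for `n ≥ 1`: `⟨ℐ⟩_1 = ⟨ℐ⟩`, `⟨ℐ⟩_{n+1} = ⟨⟨ℐ⟩_n * ⟨ℐ⟩⟩`. (Value `∅` at `n = 0`.) -/
def angleN (I : Set C) : ℕ → Set C
  | 0 => ∅
  | 1 => angle I
  | (n + 2) => angle (star (angleN I (n + 1)) (angle I))

/-- `G` is a split-generator of the triangulated category `C`: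
`C = ⟨G⟩_n` for some `n ∈ ℕ`. -/
def IsSplitGenerator (G : C) : Prop := ∃ n : ℕ, angleN {G} n = Set.univ

/-- A central action of a commutative ring `R` on the (`ℤ/m`-graded) triangulated
category `C`: a ring homomorphism `φ K : R →+* End K` for every object `K`, natural in `K`
and compatible with the shift. -/
structure CentralAction (R : Type*) [CommRing R] where
  φ : ∀ K : C, R →+* End K
  natural : ∀ {K L : C} (f : K ⟶ L) (r : R), φ K r ≫ f = f ≫ φ L r
  shift_comm : ∀ (K : C) (r : R) (n : ℤ), φ (K⟦n⟧) r = (φ K r)⟦n⟧'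

variable {R : Type*} [CommRing R]

/-- The `R`-module structure on `Hom(X, Y)` induced by a central action:
`r • f = f ≫ φ Y r` (equivalently, `φ X r ≫ f`, by naturality). -/
def CentralAction.homModule (A : CentralAction (C := C) R) (X Y : C) :
    Module R (X ⟶ Y) :=
  Module.compHom (X ⟶ Y) (A.φ Y)

/-- `Hom^•(X, Y) = ⊕_{i ∈ ℤ/m} Hom(X, Σ^i Y)` as an `R`-module, for the `ℤ/m`-graded
triangulated category `C` (`m = 0` encodes `m = ∞`, in which case `ℤ/m = ℤ`), packaged
as an object of `ModuleCat R`. -/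
noncomputable def CentralAction.HomBullet (A : CentralAction (C := C) R) (m : ℕ)
    (X Y : C) : ModuleCat R :=
  letI : ∀ i : ZMod m, Module R (X ⟶ Y⟦(ZMod.cast i : ℤ)⟧) := fun _ => A.homModule _ _
  ModuleCat.of R (⨁ i : ZMod m, (X ⟶ Y⟦(ZMod.cast i : ℤ)⟧))

/-! For a fixed object `X`, the objects `Y` with `Hom^•(X, Y)` Noetherian form a thick
triangulated subcategory: Noetherian modules are stable under submodules (which handles summands)
and extensions (the exact sequences of `Hom`-groups of a distinguished triangle, summed over the
grading), and since the shift is `m`-periodic, `Hom^•(X, Y⟦n⟧)` is `Hom^•(X, Y)` up to reindexing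
the grading by `i ↦ i + n`. The same holds in the first variable. A thick subcategory containing
a split-generator contains every object, so `Hom^•(G, Y)` is Noetherian for all `Y`, and then so
is `Hom^•(X, Y)` for all `X`. -/

section NoetherianDirectSum

variable {R : Type*} [Ring R]

theorem isNoetherian_of_ker_le_range {M N P : Type*} [AddCommGroup M] [AddCommGroup N]
    [AddCommGroup P] [Module R M] [Module R N] [Module R P] [IsNoetherian R M]
    [IsNoetherian R P] (f : M →ₗ[R] N) (g : N →ₗ[R] P) (h : LinearMap.ker g ≤ LinearMap.range f) :
    IsNoetherian R N :=
  haveI := isNoetherian_of_le h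
  isNoetherian_of_range_eq_ker (LinearMap.ker g).subtype g (Submodule.range_subtype _)

variable {ι : Type*} {M N P : ι → Type*}
  [∀ i, AddCommGroup (M i)] [∀ i, AddCommGroup (N i)] [∀ i, AddCommGroup (P i)]
  [∀ i, Module R (M i)] [∀ i, Module R (N i)] [∀ i, Module R (P i)]

theorem DFinsupp.ker_mapRange_le_range (u : ∀ i, M i →ₗ[R] N i) (v : ∀ i, N i →ₗ[R] P i)
    (h : ∀ i, LinearMap.ker (v i) ≤ LinearMap.range (u i)) :
    LinearMap.ker (DFinsupp.mapRange.linearMap v) ≤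
      LinearMap.range (DFinsupp.mapRange.linearMap u) := by
  classical
  intro x hx
  rw [← DFinsupp.sum_single (f := x)]
  refine Submodule.dfinsuppSum_mem _ _ _ fun i _ => ?_
  obtain ⟨y, hy⟩ := h i (show v i (x i) = 0 from DFunLike.congr_fun hx i)
  exact ⟨DFinsupp.single i y, by simp [hy]⟩

theorem isNoetherian_dfinsupp_of_ker_le_range (u : ∀ i, M i →ₗ[R] N i)
    (v : ∀ i, N i →ₗ[R] P i) (h : ∀ i, LinearMap.ker (v i) ≤ LinearMap.range (u i))
    (hM : IsNoetherian R (Π₀ i, M i)) (hP : IsNoetherian R (Π₀ i, P i)) :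
    IsNoetherian R (Π₀ i, N i) :=
  isNoetherian_of_ker_le_range (DFinsupp.mapRange.linearMap u) (DFinsupp.mapRange.linearMap v)
    (DFinsupp.ker_mapRange_le_range u v h)

theorem isNoetherian_dfinsupp_of_injective {κ : Type*} {Q : κ → Type*}
    [∀ k, AddCommGroup (Q k)] [∀ k, Module R (Q k)] (e : ι ≃ κ) (f : ∀ i, M i →ₗ[R] Q (e i))
    (hf : ∀ i, Function.Injective (f i)) (hQ : IsNoetherian R (Π₀ k, Q k)) :
    IsNoetherian R (Π₀ i, M i) :=
  haveI : IsNoetherian R (Π₀ i, Q (e i)) :=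
    isNoetherian_of_linearEquiv (DFinsupp.domLCongr (R := R) (M := Q) e.symm)
  isNoetherian_of_injective (DFinsupp.mapRange.linearMap f)
    ((DFinsupp.mapRange_injective _ fun i => (f i).map_zero).2 hf)

end NoetherianDirectSum

section ShiftPeriods

variable (C : Type*) [Category* C] (A : Type*) [AddCommGroup A] [HasShift C A]

def shiftPeriods : AddSubgroup A where
  carrier := {a | Nonempty (shiftFunctor C a ≅ 𝟭 C)}
  zero_mem' := ⟨shiftFunctorZero C A⟩
  add_mem' := fun {a b} ⟨ea⟩ ⟨eb⟩ =>
    ⟨shiftFunctorAdd C a b ≪≫ Functor.isoWhiskerRight ea _ ≪≫ Functor.leftUnitor _ ≪≫ eb⟩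
  neg_mem' := fun {a} ⟨ea⟩ =>
    ⟨(Functor.rightUnitor _).symm ≪≫ Functor.isoWhiskerLeft _ ea.symm ≪≫
      shiftFunctorCompIsoId C (-a) a (neg_add_cancel a)⟩

variable {C A}

theorem nonempty_shiftFunctor_iso_of_sub_mem {a b : A} (h : b - a ∈ shiftPeriods C A) :
    Nonempty (shiftFunctor C a ≅ shiftFunctor C b) :=
  let ⟨e⟩ := h
  ⟨(Functor.rightUnitor _).symm ≪≫ Functor.isoWhiskerLeft _ e.symm ≪≫
    (shiftFunctorAdd' C a (b - a) b (add_sub_cancel a b)).symm⟩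

theorem nonempty_shiftFunctor_iso_of_intCast_eq {C : Type*} [Category* C] [HasShift C ℤ]
    {m : ℕ} (hm : Nonempty (shiftFunctor C (m : ℤ) ≅ 𝟭 C)) {a b : ℤ}
    (h : (a : ZMod m) = b) : Nonempty (shiftFunctor C a ≅ shiftFunctor C b) := by
  have hm' : (m : ℤ) ∈ shiftPeriods C ℤ := hm
  have hdvd : (m : ℤ) ∣ b - a := (ZMod.intCast_eq_intCast_iff_dvd_sub _ _ _).1 h
  exact nonempty_shiftFunctor_iso_of_sub_mem
    (AddSubgroup.zmultiples_le_of_mem hm' (Int.mem_zmultiples_iff.2 hdvd))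

end ShiftPeriods

section Generation

variable (P : ObjectProperty C) [P.IsTriangulated] [P.IsStableUnderRetracts]

theorem prop_of_angleMem {I : Set C} (hI : ∀ X ∈ I, P X) {X : C} (hX : angleMem I X) : P X := by
  induction hX with
  | of hX => exact hI _ hX
  | zero hX => exact P.prop_of_isZero hX
  | shift n _ ih => exact P.le_shift n _ ih
  | sum _ _ ihX ihY =>
    exact P.ext_of_isTriangulatedClosed₂ _ (binaryBiproductTriangle_distinguished _ _) ihX ihY
  | smd h _ ih =>
    obtain ⟨r, k, hrk⟩ := h
    exact P.prop_of_retract ⟨r, k, hrk⟩ ih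
  | iso e _ ih => exact P.prop_of_iso e ih

theorem prop_of_mem_angleN {I : Set C} (hI : ∀ X ∈ I, P X) :
    ∀ (n : ℕ), ∀ X ∈ angleN I n, P X
  | 0, _, hX => hX.elim
  | 1, _, hX => prop_of_angleMem P hI hX
  | n + 2, _, hX => by
    refine prop_of_angleMem P ?_ hX
    rintro _ ⟨K₀, K₁, _, _, _, hT, h₀, h₁⟩
    exact P.ext_of_isTriangulatedClosed₂ _ hT (prop_of_mem_angleN hI (n + 1) K₀ h₀)
      (prop_of_angleMem P hI h₁)

theorem IsSplitGenerator.prop {G : C} (hG : IsSplitGenerator G) (hPG : P G) (X : C) : P X :=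
  let ⟨n, hn⟩ := hG
  prop_of_mem_angleN P (fun _ hX => (Set.mem_singleton_iff.1 hX) ▸ hPG) n X (hn ▸ trivial)

end Generation

namespace CentralAction

variable {C : Type*} [Category* C] [Preadditive C] [HasShift C ℤ] {R : Type*} [CommRing R]
  (A : CentralAction (C := C) R)

/-- A central action amounts to an `R`-linear structure on `C` with `R`-linear shift functors;
the argument is carried out in that generality. -/
abbrev linear : Linear R C where
  homModule := A.homModule
  smul_comp _ _ _ r f g := by
    change (f ≫ A.φ _ r) ≫ g = (f ≫ g) ≫ A.φ _ r
    rw [assoc, assoc, A.natural]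
  comp_smul _ _ _ _ _ _ := (assoc _ _ _).symm

theorem linear_shiftFunctor [∀ n : ℤ, (shiftFunctor C n).Additive] (n : ℤ) :
    letI := A.linear
    (shiftFunctor C n).Linear R :=
  letI := A.linear
  { map_smul := fun f r => by
      change (f ≫ A.φ _ r)⟦n⟧' = f⟦n⟧' ≫ A.φ _ r
      rw [Functor.map_comp, A.shift_comm] }

end CentralAction

section HomBullet

variable {C : Type*} [Category* C] [Preadditive C] [HasShift C ℤ] (R : Type*) [Ring R]
  [Linear R C] (m : ℕ)

def noetherianHomBulletFrom (X : C) : ObjectProperty C :=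
  fun Y => IsNoetherian R (⨁ i : ZMod m, (X ⟶ Y⟦(ZMod.cast i : ℤ)⟧))

def noetherianHomBulletTo (Y : C) : ObjectProperty C :=
  fun X => noetherianHomBulletFrom R m X Y

variable {R m}

instance (X : C) : (noetherianHomBulletFrom R m X).IsStableUnderRetracts where
  of_retract r h := isNoetherian_dfinsupp_of_injective (Equiv.refl _)
    (fun _ => Linear.rightComp R X ((r.map (shiftFunctor C _)).i))
    (fun _ _ _ hab => (cancel_mono _).1 hab) h

instance (Y : C) : (noetherianHomBulletTo R m Y).IsStableUnderRetracts where
  of_retract r h := isNoetherian_dfinsupp_of_injective (Equiv.refl _)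
    (fun _ => Linear.leftComp R _ r.r)
    (fun _ _ _ hab => (cancel_epi _).1 hab) h

theorem isStableUnderShift_noetherianHomBulletFrom
    (hm : Nonempty (shiftFunctor C (m : ℤ) ≅ 𝟭 C)) (X : C) :
    (noetherianHomBulletFrom R m X).IsStableUnderShift ℤ where
  isStableUnderShiftBy n := ⟨fun Y hY => by
    have e : ∀ i : ZMod m,
        Nonempty ((Y⟦n⟧)⟦(ZMod.cast i : ℤ)⟧ ≅ Y⟦(ZMod.cast (i + (n : ZMod m)) : ℤ)⟧) := fun i =>
      have ⟨p⟩ := nonempty_shiftFunctor_iso_of_intCast_eq hm (a := n + ZMod.cast i)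
        (b := ZMod.cast (i + (n : ZMod m)))
        (by push_cast [ZMod.intCast_cast, ZMod.cast_id]; ring)
      ⟨((shiftFunctorAdd C n _).app Y).symm ≪≫ p.app Y⟩
    exact isNoetherian_dfinsupp_of_injective (Equiv.addRight (n : ZMod m))
      (fun i => Linear.rightComp R X (e i).some.hom)
      (fun _ _ _ hab => (cancel_mono _).1 hab) hY⟩

variable [∀ n : ℤ, (shiftFunctor C n).Additive]

theorem noetherianHomBulletFrom_shift_left [∀ n : ℤ, (shiftFunctor C n).Linear R] {X Y : C}
    (n : ℤ) (h : noetherianHomBulletFrom R m X (Y⟦-n⟧)) :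
    noetherianHomBulletFrom R m (X⟦n⟧) Y :=
  isNoetherian_dfinsupp_of_injective (Equiv.refl _)
    (fun i => (Linear.leftComp R _ (shiftShiftNeg X n).inv ∘ₗ
        Linear.rightComp R _ ((shiftFunctorComm C (ZMod.cast i : ℤ) (-n)).app Y).hom ∘ₗ
        (shiftFunctor C (-n)).mapLinearMap R :
      (X⟦n⟧ ⟶ Y⟦(ZMod.cast i : ℤ)⟧) →ₗ[R] (X ⟶ (Y⟦-n⟧)⟦(ZMod.cast i : ℤ)⟧)))
    (fun _ _ _ hab => (shiftFunctor C (-n)).map_injective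
      ((cancel_mono _).1 ((cancel_epi _).1 hab))) h

section Pretriangulated

open scoped ZeroObject

variable [HasZeroObject C] [Pretriangulated C]

theorem ker_rightComp_mor₂_le_range (T : Triangle C) (hT : T ∈ distTriang C) (X : C) :
    LinearMap.ker (Linear.rightComp R X T.mor₂) ≤ LinearMap.range (Linear.rightComp R X T.mor₁) :=
  fun f hf =>
  let ⟨g, hg⟩ := T.coyoneda_exact₂ hT f hf
  ⟨g, hg.symm⟩

theorem ker_leftComp_mor₁_le_range (T : Triangle C) (hT : T ∈ distTriang C) (Y : C) :
    LinearMap.ker (Linear.leftComp R Y T.mor₁) ≤ LinearMap.range (Linear.leftComp R Y T.mor₂) :=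
  fun f hf =>
  let ⟨g, hg⟩ := T.yoneda_exact₂ hT f hf
  ⟨g, hg.symm⟩

instance (X : C) : (noetherianHomBulletFrom R m X).ContainsZero where
  exists_zero := ⟨0, isZero_zero C, by
    have : ∀ i : ZMod m, Subsingleton (X ⟶ (0 : C)⟦(ZMod.cast i : ℤ)⟧) := fun _ =>
      ⟨((shiftFunctor C _).map_isZero (isZero_zero C)).eq_of_tgt⟩
    exact inferInstanceAs (IsNoetherian R (⨁ i : ZMod m, _))⟩

instance (Y : C) : (noetherianHomBulletTo R m Y).ContainsZero where
  exists_zero := ⟨0, isZero_zero C, by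
    have : ∀ i : ZMod m, Subsingleton ((0 : C) ⟶ Y⟦(ZMod.cast i : ℤ)⟧) := fun _ =>
      ⟨(isZero_zero C).eq_of_src⟩
    exact inferInstanceAs (IsNoetherian R (⨁ i : ZMod m, _))⟩

instance (X : C) : (noetherianHomBulletFrom R m X).IsTriangulatedClosed₂ :=
  .mk' fun T hT h₁ h₃ => isNoetherian_dfinsupp_of_ker_le_range _ _
    (fun i => ker_rightComp_mor₂_le_range _ (T.shift_distinguished hT (ZMod.cast i)) X)
    h₁ h₃

instance (Y : C) : (noetherianHomBulletTo R m Y).IsTriangulatedClosed₂ :=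
  .mk' fun T hT h₁ h₃ => isNoetherian_dfinsupp_of_ker_le_range _ _
    (fun _ => ker_leftComp_mor₁_le_range T hT _) h₃ h₁

theorem isTriangulated_noetherianHomBulletFrom
    (hm : Nonempty (shiftFunctor C (m : ℤ) ≅ 𝟭 C)) (X : C) :
    (noetherianHomBulletFrom R m X).IsTriangulated where
  __ := isStableUnderShift_noetherianHomBulletFrom hm X

theorem isTriangulated_noetherianHomBulletTo [∀ n : ℤ, (shiftFunctor C n).Linear R]
    (hm : Nonempty (shiftFunctor C (m : ℤ) ≅ 𝟭 C)) (Y : C) :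
    (noetherianHomBulletTo R m Y).IsTriangulated where
  isStableUnderShiftBy n := ⟨fun X hX =>
    have := isStableUnderShift_noetherianHomBulletFrom (R := R) hm X
    noetherianHomBulletFrom_shift_left n ((noetherianHomBulletFrom R m X).le_shift (-n) Y hX)⟩

end Pretriangulated

end HomBullet

theorem isNoetherian_hom_of_isNoetherian_generator_general
    (A : CentralAction (C := C) R) (m : ℕ)
    (hgr : Nonempty (shiftFunctor C (m : ℤ) ≅ 𝟭 C))
    (G : C) (hG : IsSplitGenerator G)
    (hN : IsNoetherian R (A.HomBullet m G G)) :
    ∀ X Y : C, IsNoetherian R (A.HomBullet m X Y) := by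
  let := A.linear
  have := A.linear_shiftFunctor
  intro X Y
  have := isTriangulated_noetherianHomBulletFrom (R := R) hgr G
  have := isTriangulated_noetherianHomBulletTo (R := R) hgr Y
  have hGY : noetherianHomBulletFrom R m G Y := hG.prop _ hN Y
  exact hG.prop (noetherianHomBulletTo R m Y) hGY X

/-- Let `C` be a `ℤ/m`-graded triangulated category (`1 ≤ m ≤ ∞`; here
`m = 0` encodes `m = ∞`) and `R` a commutative Noetherian ring acting centrally on `C`.
If `G` is a split-generator of `C` such that `Hom^•(G, G)` is a Noetherian `R`-module,
then `Hom^•(X, Y)` is a Noetherian `R`-module for all objects `X, Y`. -/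
theorem isNoetherian_hom_of_isNoetherian_generator
    [IsNoetherianRing R] (A : CentralAction (C := C) R) (m : ℕ)
    (hgr : Nonempty (shiftFunctor C (m : ℤ) ≅ 𝟭 C))
    (G : C) (hG : IsSplitGenerator G)
    (hN : IsNoetherian R (A.HomBullet m G G)) :
    ∀ X Y : C, IsNoetherian R (A.HomBullet m X Y) :=
  isNoetherian_hom_of_isNoetherian_generator_general A m hgr G hG hN

end RouquierDim
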